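/- For all real x > 0, 2·(sinh x)/x + (tanh x)/x > 2·x/(sinh x) + x/(tanh x) > 3. -/

import Mathlib

/-!
Clearing denominators (with `tanh = sinh / cosh`), the two inequalities become
`x² cosh x (2 + cosh x) < sinh² x (2 cosh x + 1)` and `3 sinh x < x (2 + cosh x)`.
The second holds because `x - 3 sinh x / (2 + cosh x)` vanishes at `0` and has derivative
`((cosh x - 1) / (2 + cosh x))² > 0`. The first reduces, in the half argument `y = x / 2` with
`K = cosh y`, to the classical Huygens inequality `3 y < 2 sinh y + tanh y` (whose difference has
derivative `(K - 1)² (2 K + 1) / K²`) together with the polynomial inequality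
`(2 K + 1) (4 K⁴ - 1) ≤ 9 K⁴ (2 K - 1)`, whose two sides differ by `(K - 1)² (10 K³ + 7 K² + 4 K + 1)`.
-/

open Real Set

theorem pos_of_hasDerivAt_of_map_zero {f f' : ℝ → ℝ} (hf : ∀ y, HasDerivAt f (f' y) y)
    (hf₀ : f 0 = 0) (hf' : ∀ y, 0 < y → 0 < f' y) {x : ℝ} (hx : 0 < x) : 0 < f x := by
  have hmono : StrictMonoOn f (Ici 0) :=
    strictMonoOn_of_hasDerivWithinAt_pos (convex_Ici 0)
      (fun y _ ↦ (hf y).continuousAt.continuousWithinAt)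
      (fun y _ ↦ (hf y).hasDerivWithinAt)
      (fun y hy ↦ hf' y (by simpa using hy))
  simpa [hf₀] using hmono self_mem_Ici hx.le hx

namespace Real

theorem three_mul_lt_two_mul_sinh_add_tanh {x : ℝ} (hx : 0 < x) :
    3 * x < 2 * sinh x + tanh x := by
  have hderiv (y : ℝ) : HasDerivAt (fun y ↦ 2 * sinh y + sinh y / cosh y - 3 * y)
      ((cosh y - 1) ^ 2 * (2 * cosh y + 1) / cosh y ^ 2) y := by
    refine ((((hasDerivAt_sinh y).const_mul 2).add
      ((hasDerivAt_sinh y).div (hasDerivAt_cosh y) (cosh_pos y).ne')).sub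
      ((hasDerivAt_id y).const_mul 3)).congr_deriv ?_
    field_simp
    linear_combination cosh_sq y
  have hpos := pos_of_hasDerivAt_of_map_zero hderiv (by simp) (fun y hy ↦ by
    have : 1 < cosh y := one_lt_cosh.2 hy.ne'
    positivity) hx
  rw [tanh_eq_sinh_div_cosh]
  linarith

theorem three_mul_sinh_lt_mul_two_add_cosh {x : ℝ} (hx : 0 < x) :
    3 * sinh x < x * (2 + cosh x) := by
  have hderiv (y : ℝ) : HasDerivAt (fun y ↦ y - 3 * sinh y / (2 + cosh y))
      ((cosh y - 1) ^ 2 / (2 + cosh y) ^ 2) y := by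
    refine ((hasDerivAt_id y).sub (((hasDerivAt_sinh y).const_mul 3).div
      ((hasDerivAt_cosh y).const_add 2) (by positivity))).congr_deriv ?_
    field_simp
    linear_combination (-3) * cosh_sq y
  have hpos := pos_of_hasDerivAt_of_map_zero hderiv (by simp) (fun y hy ↦ by
    have : 0 < cosh y - 1 := sub_pos.2 (one_lt_cosh.2 hy.ne')
    positivity) hx
  have : 3 * sinh x / (2 + cosh x) < x := by simpa using hpos
  rwa [div_lt_iff₀ (by positivity)] at this

theorem sq_mul_cosh_mul_two_add_cosh_lt_sinh_sq_mul {x : ℝ} (hx : 0 < x) :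
    x ^ 2 * cosh x * (2 + cosh x) < sinh x ^ 2 * (2 * cosh x + 1) := by
  obtain ⟨y, rfl⟩ : ∃ y, x = 2 * y := ⟨x / 2, by ring⟩
  have hy : 0 < y := by linarith
  have hK : 1 < cosh y := one_lt_cosh.2 hy.ne'
  have huygens : 3 * y * cosh y < sinh y * (2 * cosh y + 1) := by
    have h := three_mul_lt_two_mul_sinh_add_tanh hy
    rw [tanh_eq_sinh_div_cosh] at h
    calc 3 * y * cosh y < (2 * sinh y + sinh y / cosh y) * cosh y := by gcongr
      _ = sinh y * (2 * cosh y + 1) := by field_simp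
  have hpoly :
      (2 * cosh y + 1) * (4 * cosh y ^ 4 - 1) ≤ 9 * cosh y ^ 4 * (2 * cosh y - 1) := by
    have : 0 ≤ (cosh y - 1) ^ 2 * (10 * cosh y ^ 3 + 7 * cosh y ^ 2 + 4 * cosh y + 1) := by
      positivity
    linarith
  have key :
      y ^ 2 * (4 * cosh y ^ 4 - 1) < sinh y ^ 2 * cosh y ^ 2 * (4 * cosh y ^ 2 - 1) := by
    have h4 : 0 < 4 * cosh y ^ 4 - 1 := by
      linarith [one_lt_pow₀ hK (by norm_num : 4 ≠ 0)]
    refine lt_of_mul_lt_mul_left ?_ (by positivity : (0 : ℝ) ≤ 9 * cosh y ^ 2)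
    calc 9 * cosh y ^ 2 * (y ^ 2 * (4 * cosh y ^ 4 - 1))
        = (3 * y * cosh y) ^ 2 * (4 * cosh y ^ 4 - 1) := by ring
      _ < (sinh y * (2 * cosh y + 1)) ^ 2 * (4 * cosh y ^ 4 - 1) := by gcongr
      _ = sinh y ^ 2 * (2 * cosh y + 1) * ((2 * cosh y + 1) * (4 * cosh y ^ 4 - 1)) := by ring
      _ ≤ sinh y ^ 2 * (2 * cosh y + 1) * (9 * cosh y ^ 4 * (2 * cosh y - 1)) := by gcongr
      _ = 9 * cosh y ^ 2 * (sinh y ^ 2 * cosh y ^ 2 * (4 * cosh y ^ 2 - 1)) := by ring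
  rw [sinh_two_mul, cosh_two_mul]
  simp only [mul_pow]
  rw [sinh_sq] at key ⊢
  linear_combination 4 * key

end Real

theorem huygens_hyperbolic_refined (x : ℝ) (hx : 0 < x) :
    2 * (Real.sinh x) / x + (Real.tanh x) / x > 2 * x / (Real.sinh x) + x / (Real.tanh x) ∧
    2 * x / (Real.sinh x) + x / (Real.tanh x) > 3 := by
  have hs : 0 < sinh x := sinh_pos_iff.2 hx
  rw [tanh_eq_sinh_div_cosh]
  constructor
  · field_simp
    exact sq_mul_cosh_mul_two_add_cosh_lt_sinh_sq_mul hx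
  · field_simp
    exact three_mul_sinh_lt_mul_two_add_cosh hx
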